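/- Under assumptions (A.1) and (A.2), for any fixed w in the Euclidean ball B(R), any t > 0, and i.i.d. samples Z₁,…,Z_n ∼ P, the empirical gradient concentrates: P[‖(1/n)·Σᵢ ∇f(w,Zᵢ) − ∇F(w)‖ ≥ t] ≤ 6^d · exp(−n·t²/(8σ₁²)), where σ₁ = B + MR. -/

import Mathlib

/-!
For every `z`, `‖∇f(w,z)‖ ≤ ‖∇f(0,z)‖ + M‖w‖ ≤ B + MR = σ₁`. A `1/2`-net `N` of the unit sphere
has at most `5^d` points (a volume comparison of disjoint balls), and every `v ≠ 0` satisfies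
`‖v‖ ≤ 2⟪u, v⟫` for some `u ∈ N`. So if the empirical mean deviates from `∇F(w)` by at least `t`,
then for some `u ∈ N` the i.i.d. scalars `⟪u, ∇f(w,Zᵢ)⟫ ∈ [-σ₁, σ₁]` exceed their total mean by at
least `nt/2`. Hoeffding's inequality bounds each such event by `exp(-nt²/(8σ₁²))`, and a union
bound over `N` gives the factor `5^d ≤ 6^d`.
-/

open MeasureTheory Metric Real Module
open scoped ENNReal NNReal InnerProductSpace

section Packing

variable {E : Type*} [NormedAddCommGroup E] [NormedSpace ℝ E] [FiniteDimensional ℝ E]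

theorem Finset.card_le_of_isSeparated_of_subset_closedBall {t : Finset E} {x : E} {r : ℝ}
    {ε : ℝ≥0} (hε : 0 < ε) (hr : 0 ≤ r) (hsub : (t : Set E) ⊆ closedBall x r)
    (hsep : IsSeparated ε (t : Set E)) :
    (t.card : ℝ) ≤ ((2 * r + ε) / ε) ^ finrank ℝ E := by
  borelize E
  set μ : Measure E := Measure.addHaar
  set δ : ℝ := ε / 2
  have hδ : 0 < δ := by positivity
  have hdisj : (t : Set E).PairwiseDisjoint (ball · δ) := fun u hu v hv huv => by
    refine ball_disjoint_ball ?_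
    have : (ε : ℝ≥0∞) < edist u v := hsep hu hv huv
    rw [edist_nndist, ENNReal.coe_lt_coe, ← NNReal.coe_lt_coe, coe_nndist] at this
    have hδδ : δ + δ = ε := add_halves _
    linarith
  have hunion : (⋃ u ∈ t, ball u δ) ⊆ ball x (r + δ) := by
    refine Set.iUnion₂_subset fun u hu => ball_subset_ball' ?_
    linarith [mem_closedBall.1 (hsub (Finset.mem_coe.2 hu))]
  have hvol : ENNReal.ofReal (t.card * δ ^ finrank ℝ E) * μ (ball 0 1)
      ≤ ENNReal.ofReal ((r + δ) ^ finrank ℝ E) * μ (ball 0 1) :=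
    calc ENNReal.ofReal (t.card * δ ^ finrank ℝ E) * μ (ball 0 1)
        = ∑ u ∈ t, μ (ball u δ) := by
          rw [Finset.sum_congr rfl fun u _ => Measure.addHaar_ball_of_pos μ u hδ, Finset.sum_const,
            nsmul_eq_mul, ENNReal.ofReal_mul (Nat.cast_nonneg _), ENNReal.ofReal_natCast, mul_assoc]
      _ = μ (⋃ u ∈ t, ball u δ) := (measure_biUnion_finset hdisj fun _ _ => measurableSet_ball).symm
      _ ≤ μ (ball x (r + δ)) := measure_mono hunion
      _ = ENNReal.ofReal ((r + δ) ^ finrank ℝ E) * μ (ball 0 1) :=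
          Measure.addHaar_ball_of_pos μ x (by positivity)
  rw [ENNReal.mul_le_mul_iff_left (measure_ball_pos μ 0 one_pos).ne' measure_ball_lt_top.ne,
    ENNReal.ofReal_le_ofReal_iff (by positivity), ← le_div_iff₀ (by positivity), ← div_pow] at hvol
  refine hvol.trans_eq ?_
  congr 1
  field_simp [δ]
  ring

theorem packingNumber_le_of_subset_closedBall {A : Set E} {x : E} {r : ℝ} {ε : ℝ≥0}
    (hε : 0 < ε) (hr : 0 ≤ r) (hA : A ⊆ closedBall x r) :
    packingNumber ε A ≤ ⌊((2 * r + ε) / ε) ^ finrank ℝ E⌋₊ := by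
  set k := ⌊((2 * r + ε) / ε) ^ finrank ℝ E⌋₊
  refine iSup₂_le fun C hC => iSup_le fun hsep => ?_
  by_contra! hk
  obtain ⟨s, hsC, hs⟩ := Set.exists_subset_encard_eq (Order.add_one_le_of_lt hk)
  have hs' : s.encard = (k + 1 : ℕ) := by simpa using hs
  have hfin : s.Finite := Set.finite_of_encard_eq_coe hs'
  have hcard : hfin.toFinset.card = k + 1 := by
    rw [← ENat.natCast_inj, ← Set.encard_coe_eq_coe_finsetCard, Set.Finite.coe_toFinset, hs']
  have := Finset.card_le_of_isSeparated_of_subset_closedBall (t := hfin.toFinset) hε hr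
    (by simpa using (hsC.trans hC).trans hA) (by simpa using hsep.subset hsC)
  rw [hcard] at this
  exact absurd this (not_le.2 (by exact_mod_cast Nat.lt_floor_add_one _))

theorem exists_finset_isCover_sphere {ε : ℝ≥0} (hε : 0 < ε) :
    ∃ N : Finset E, (N.card : ℝ) ≤ ((2 + ε) / ε) ^ finrank ℝ E ∧ (N : Set E) ⊆ sphere 0 1 ∧
      IsCover ε (sphere 0 1) (N : Set E) := by
  have hpack : packingNumber ε (sphere (0 : E) 1) ≤ ⌊((2 * 1 + ε) / ε) ^ finrank ℝ E⌋₊ :=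
    packingNumber_le_of_subset_closedBall hε zero_le_one sphere_subset_closedBall
  have hfin : packingNumber ε (sphere (0 : E) 1) ≠ ⊤ := ne_top_of_le_ne_top (by simp) hpack
  have hS : (maximalSeparatedSet ε (sphere (0 : E) 1)).Finite :=
    Set.finite_of_encard_le_coe ((encard_maximalSeparatedSet hfin).trans_le hpack)
  refine ⟨hS.toFinset, ?_, by simpa using maximalSeparatedSet_subset,
    by simpa using isCover_maximalSeparatedSet hfin⟩
  simpa using Finset.card_le_of_isSeparated_of_subset_closedBall hε zero_le_one
    (by simpa using maximalSeparatedSet_subset.trans sphere_subset_closedBall)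
    (by simpa using isSeparated_maximalSeparatedSet)

end Packing

section InnerProduct

variable {F : Type*} [NormedAddCommGroup F] [InnerProductSpace ℝ F]

theorem exists_mem_inner_ge_of_isCover_sphere {ε : ℝ≥0} {N : Set F}
    (hN : IsCover ε (sphere 0 1) N) {v : F} (hv : v ≠ 0) :
    ∃ u ∈ N, (1 - ε) * ‖v‖ ≤ ⟪u, v⟫_ℝ := by
  have hv' : 0 < ‖v‖ := norm_pos_iff.2 hv
  set u₀ : F := ‖v‖⁻¹ • v
  have hu₀ : u₀ ∈ sphere (0 : F) 1 := by
    simp [u₀, norm_smul, hv'.ne']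
  obtain ⟨u, huN, hu⟩ := Set.mem_iUnion₂.1 (hN.subset_iUnion_closedBall hu₀)
  refine ⟨u, huN, ?_⟩
  have h₀ : ⟪u₀, v⟫_ℝ = ‖v‖ := by
    rw [real_inner_smul_left, real_inner_self_eq_norm_sq]
    field_simp
  have hdiff : ⟪u₀ - u, v⟫_ℝ ≤ ε * ‖v‖ :=
    (real_inner_le_norm _ _).trans
      (mul_le_mul_of_nonneg_right (by rwa [← dist_eq_norm, ← mem_closedBall]) hv'.le)
  rw [inner_sub_left] at hdiff
  linarith

theorem exists_mem_sum_inner_sub_ge_of_isCover_sphere {N : Set F}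
    (hN : IsCover (1 / 2) (sphere 0 1) N) {n : ℕ} (v : Fin n → F) (m : F) {t : ℝ} (ht : 0 < t)
    (h : t ≤ ‖(n : ℝ)⁻¹ • ∑ i, v i - m‖) :
    ∃ u ∈ N, n * t / 2 ≤ ∑ i, (⟪u, v i⟫_ℝ - ⟪u, m⟫_ℝ) := by
  obtain ⟨u, huN, hu⟩ :=
    exists_mem_inner_ge_of_isCover_sphere hN (norm_pos_iff.1 (ht.trans_le h))
  refine ⟨u, huN, ?_⟩
  have hsum : ∑ i, (⟪u, v i⟫_ℝ - ⟪u, m⟫_ℝ) = n * ⟪u, (n : ℝ)⁻¹ • ∑ i, v i - m⟫_ℝ := by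
    rcases n.eq_zero_or_pos with rfl | hn
    · simp
    · rw [inner_sub_right, real_inner_smul_right, inner_sum, Finset.sum_sub_distrib,
        Finset.sum_const, Finset.card_univ, Fintype.card_fin, nsmul_eq_mul]
      field_simp
  norm_num at hu
  rw [hsum]
  have := mul_le_mul_of_nonneg_left (show t / 2 ≤ ⟪u, (n : ℝ)⁻¹ • ∑ i, v i - m⟫_ℝ by linarith)
    (Nat.cast_nonneg (α := ℝ) n)
  linarith

end InnerProduct

section Sampling

open ProbabilityTheory

variable {Ω 𝒵 : Type*} [MeasurableSpace Ω] [MeasurableSpace 𝒵] {μ : Measure Ω} {P : Measure 𝒵}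
  {n : ℕ} {Z : Fin n → Ω → 𝒵}

theorem measure_sum_sub_integral_ge_le (hZ : ∀ i, Measurable (Z i)) (hiid : iIndepFun Z μ)
    (hlaw : ∀ i, μ.map (Z i) = P) {φ : 𝒵 → ℝ} (hφ : AEStronglyMeasurable φ P) {c : ℝ}
    (hφc : ∀ z, |φ z| ≤ c) {ε : ℝ} (hε : 0 ≤ ε) :
    μ {ω | ε ≤ ∑ i, (φ (Z i ω) - ∫ z, φ z ∂P)} ≤
      ENNReal.ofReal (exp (-ε ^ 2 / (2 * n * c ^ 2))) := by
  have := hiid.isProbabilityMeasure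
  have hmean : ∀ i, ∫ ω, φ (Z i ω) ∂μ = ∫ z, φ z ∂P := fun i => by
    rw [← hlaw i, integral_map (hZ i).aemeasurable (hlaw i ▸ hφ)]
  have hsubG : ∀ i ∈ Finset.univ, HasSubgaussianMGF (fun ω => φ (Z i ω) - ∫ z, φ z ∂P)
      ((‖c - -c‖₊ / 2) ^ 2) μ := fun i _ => by
    simpa [hmean i] using hasSubgaussianMGF_of_mem_Icc (μ := μ)
      (X := fun ω => φ (Z i ω)) (a := -c) (b := c)
      (AEMeasurable.comp_measurable (by rw [hlaw i]; exact hφ.aemeasurable) (hZ i))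
      (ae_of_all _ fun ω => abs_le.1 (hφc (Z i ω)))
  have hindep : iIndepFun (fun i ω => φ (Z i ω) - ∫ z, φ z ∂P) μ :=
    hiid.comp₀ (fun _ z => φ z - ∫ z, φ z ∂P) (fun i => (hZ i).aemeasurable)
      (fun i => by rw [hlaw i]; exact hφ.aemeasurable.sub_const _)
  rw [← ofReal_measureReal]
  refine ENNReal.ofReal_le_ofReal
    ((HasSubgaussianMGF.measure_sum_ge_le_of_iIndepFun hindep hsubG hε).trans_eq ?_)
  have hparam : ((∑ _i : Fin n, (‖c - -c‖₊ / 2) ^ 2 : ℝ≥0) : ℝ) = n * c ^ 2 := by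
    simp [← two_mul]
  rw [hparam, mul_assoc]

theorem measure_norm_sampleMean_sub_integral_ge_le {F : Type*} [NormedAddCommGroup F]
    [InnerProductSpace ℝ F] [FiniteDimensional ℝ F] [IsFiniteMeasure P]
    (hZ : ∀ i, Measurable (Z i)) (hiid : iIndepFun Z μ) (hlaw : ∀ i, μ.map (Z i) = P)
    {g : 𝒵 → F} (hg : AEStronglyMeasurable g P) {c : ℝ} (hgc : ∀ z, ‖g z‖ ≤ c) {t : ℝ}
    (ht : 0 < t) :
    μ {ω | t ≤ ‖(n : ℝ)⁻¹ • ∑ i, g (Z i ω) - ∫ z, g z ∂P‖} ≤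
      ENNReal.ofReal (5 ^ finrank ℝ F * exp (-(n * t ^ 2) / (8 * c ^ 2))) := by
  obtain ⟨N, hNcard, hNsphere, hNcover⟩ := exists_finset_isCover_sphere (E := F) (ε := 1 / 2)
    (by norm_num)
  norm_num at hNcard
  have hint : Integrable g P := .of_bound hg c (ae_of_all _ hgc)
  have hint_inner : ∀ u : F, ∫ z, ⟪u, g z⟫_ℝ ∂P = ⟪u, ∫ z, g z ∂P⟫_ℝ :=
    integral_inner hint
  have hcover : {ω | t ≤ ‖(n : ℝ)⁻¹ • ∑ i, g (Z i ω) - ∫ z, g z ∂P‖} ⊆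
      ⋃ u ∈ N, {ω | n * t / 2 ≤ ∑ i, (⟪u, g (Z i ω)⟫_ℝ - ∫ z, ⟪u, g z⟫_ℝ ∂P)} := fun ω hω => by
    obtain ⟨u, huN, hu⟩ :=
      exists_mem_sum_inner_sub_ge_of_isCover_sphere hNcover (fun i => g (Z i ω)) _ ht hω
    exact Set.mem_biUnion huN (by simpa only [Set.mem_ofPred_eq, hint_inner] using hu)
  have hu : ∀ u ∈ N, μ {ω | n * t / 2 ≤ ∑ i, (⟪u, g (Z i ω)⟫_ℝ - ∫ z, ⟪u, g z⟫_ℝ ∂P)} ≤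
      ENNReal.ofReal (exp (-(n * t ^ 2) / (8 * c ^ 2))) := fun u huN => by
    have hu1 : ‖u‖ = 1 := mem_sphere_zero_iff_norm.1 (hNsphere huN)
    refine (measure_sum_sub_integral_ge_le hZ hiid hlaw (aestronglyMeasurable_const.inner hg)
      (c := c) (fun z => (abs_real_inner_le_norm u (g z)).trans (by rw [hu1, one_mul]; exact hgc z))
      (by positivity)).trans_eq ?_
    -- the exponents agree also when `n = 0` or `c = 0`, where both divisions give `0`
    congr 2
    rcases eq_or_ne (n : ℝ) 0 with hn | hn
    · simp [hn]
    rcases eq_or_ne c 0 with hc | hc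
    · simp [hc]
    field_simp
    ring
  calc μ {ω | t ≤ ‖(n : ℝ)⁻¹ • ∑ i, g (Z i ω) - ∫ z, g z ∂P‖}
      ≤ μ (⋃ u ∈ N, {ω | n * t / 2 ≤ ∑ i, (⟪u, g (Z i ω)⟫_ℝ - ∫ z, ⟪u, g z⟫_ℝ ∂P)}) :=
        measure_mono hcover
    _ ≤ ∑ u ∈ N, μ {ω | n * t / 2 ≤ ∑ i, (⟪u, g (Z i ω)⟫_ℝ - ∫ z, ⟪u, g z⟫_ℝ ∂P)} :=
        measure_biUnion_finset_le _ _
    _ ≤ ∑ _u ∈ N, ENNReal.ofReal (exp (-(n * t ^ 2) / (8 * c ^ 2))) := Finset.sum_le_sum hu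
    _ = ENNReal.ofReal (N.card * exp (-(n * t ^ 2) / (8 * c ^ 2))) := by
        rw [Finset.sum_const, nsmul_eq_mul, ENNReal.ofReal_mul (Nat.cast_nonneg _),
          ENNReal.ofReal_natCast]
    _ ≤ ENNReal.ofReal (5 ^ finrank ℝ F * exp (-(n * t ^ 2) / (8 * c ^ 2))) := by
        gcongr

end Sampling

theorem empirical_gradient_concentration_general {d n : ℕ} {𝒵 : Type*} [MeasurableSpace 𝒵]
    (f : EuclideanSpace ℝ (Fin d) → 𝒵 → ℝ) (B M R : ℝ)
    (hM : 0 < M)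
    (hfB : ∀ z, ‖gradient (fun w => f w z) 0‖ ≤ B)
    (hLipG : ∀ z u v,
      ‖gradient (fun w => f w z) u - gradient (fun w => f w z) v‖ ≤ M * ‖u - v‖)
    {Ω : Type*} [MeasurableSpace Ω] (ℙ : Measure Ω)
    (P : Measure 𝒵) [IsProbabilityMeasure P]
    (Z : Fin n → Ω → 𝒵) (hZmeas : ∀ i, Measurable (Z i))
    (hiid : ProbabilityTheory.iIndepFun Z ℙ)
    (hlaw : ∀ i, ℙ.map (Z i) = P)
    (hgm : ∀ w, AEStronglyMeasurable (fun z => gradient (fun u => f u z) w) P)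
    (w : EuclideanSpace ℝ (Fin d)) (hw : w ∈ Metric.closedBall (0 : EuclideanSpace ℝ (Fin d)) R)
    (t : ℝ) (ht : 0 < t) :
    ℙ {ω | t ≤ ‖(n : ℝ)⁻¹ • (∑ i, gradient (fun u => f u (Z i ω)) w) -
        ∫ z, gradient (fun u => f u z) w ∂P‖}
      ≤ ENNReal.ofReal ((6 : ℝ) ^ d * Real.exp (-(n * t ^ 2) / (8 * (B + M * R) ^ 2))) := by
  have hbound : ∀ z, ‖gradient (fun u => f u z) w‖ ≤ B + M * R := fun z =>
    calc ‖gradient (fun u => f u z) w‖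
        ≤ ‖gradient (fun u => f u z) w - gradient (fun u => f u z) 0‖
          + ‖gradient (fun u => f u z) 0‖ := norm_le_norm_sub_add _ _
      _ ≤ M * ‖w - 0‖ + B := add_le_add (hLipG z w 0) (hfB z)
      _ ≤ B + M * R := by
          rw [sub_zero]
          nlinarith [mem_closedBall_zero_iff.1 hw]
  have h := measure_norm_sampleMean_sub_integral_ge_le hZmeas hiid hlaw (hgm w) hbound ht
  rw [finrank_euclideanSpace_fin] at h
  exact h.trans (ENNReal.ofReal_le_ofReal (by gcongr; norm_num))

/-- Under (A.1)–(A.2), for fixed `w` in the ball of radius `R` and i.i.d.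
samples `Z₁,…,Z_n ∼ P`, the empirical gradient concentrates:
`P[‖(1/n)Σ ∇f(w,Zᵢ) − ∇F(w)‖ ≥ t] ≤ 6^d exp(−n t²/(8σ₁²))` with `σ₁ = B + MR`. -/
theorem empirical_gradient_concentration {d n : ℕ} {𝒵 : Type*} [MeasurableSpace 𝒵]
    (f : EuclideanSpace ℝ (Fin d) → 𝒵 → ℝ) (A B C M L R : ℝ)
    (hA : 0 ≤ A) (hB : 0 ≤ B) (hC : 0 ≤ C) (hM : 0 < M) (hL : 0 < L) (hR : 0 < R)
    (hC2 : ∀ z, ContDiff ℝ 2 (fun w => f w z))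
    (hfA : ∀ z, |f 0 z| ≤ A)
    (hfB : ∀ z, ‖gradient (fun w => f w z) 0‖ ≤ B)
    (hfC : ∀ z, ‖fderiv ℝ (gradient (fun w => f w z)) 0‖ ≤ C)
    (hLipG : ∀ z u v,
      ‖gradient (fun w => f w z) u - gradient (fun w => f w z) v‖ ≤ M * ‖u - v‖)
    (hLipH : ∀ z u v,
      ‖fderiv ℝ (gradient (fun w => f w z)) u - fderiv ℝ (gradient (fun w => f w z)) v‖
        ≤ L * ‖u - v‖)
    {Ω : Type*} [MeasurableSpace Ω] (ℙ : Measure Ω) [IsProbabilityMeasure ℙ]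
    (P : Measure 𝒵) [IsProbabilityMeasure P]
    (Z : Fin n → Ω → 𝒵) (hZmeas : ∀ i, Measurable (Z i))
    (hiid : ProbabilityTheory.iIndepFun Z ℙ)
    (hlaw : ∀ i, ℙ.map (Z i) = P)
    (hgm : ∀ w, AEStronglyMeasurable (fun z => gradient (fun u => f u z) w) P)
    (hn : 0 < n)
    (w : EuclideanSpace ℝ (Fin d)) (hw : w ∈ Metric.closedBall (0 : EuclideanSpace ℝ (Fin d)) R)
    (t : ℝ) (ht : 0 < t) :
    ℙ {ω | t ≤ ‖(n : ℝ)⁻¹ • (∑ i, gradient (fun u => f u (Z i ω)) w) -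
        ∫ z, gradient (fun u => f u z) w ∂P‖}
      ≤ ENNReal.ofReal ((6 : ℝ) ^ d * Real.exp (-(n * t ^ 2) / (8 * (B + M * R) ^ 2))) :=
  empirical_gradient_concentration_general f B M R hM hfB hLipG ℙ P Z hZmeas hiid hlaw hgm w hw t ht
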